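/- In stage i > 1 with designed rewards H_i(s), every better response learning starting from s ∈ T_i \ {s_i} converges to a configuration s' ∈ T_i such that s'.p_k = s.p_k for all k < m_i(s) and s'.p_{m_i(s)} = s_f.p_i. -/

import Mathlib

open Finset Function

/-- Total mining power invested in coin `c` in configuration `s`. -/
noncomputable def totalPower {ι C : Type*} [Fintype ι] [DecidableEq C]
    (m : ι → ℝ) (s : ι → C) (c : C) : ℝ :=
  ∑ p, if s p = c then m p else 0

/-- Revenue per unit of coin `c` in configuration `s`. -/
noncomputable def RPU {ι C : Type*} [Fintype ι] [DecidableEq C]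
    (m : ι → ℝ) (F : C → ℝ) (s : ι → C) (c : C) : ℝ :=
  F c / totalPower m s c

/-- Payoff of miner `p` in configuration `s`. -/
noncomputable def payoff {ι C : Type*} [Fintype ι] [DecidableEq C]
    (m : ι → ℝ) (F : C → ℝ) (s : ι → C) (p : ι) : ℝ :=
  m p * F (s p) / totalPower m s (s p)

/-- A better response step of miner `p` moving to coin `c`. -/
def betterStep {ι C : Type*} [Fintype ι] [DecidableEq ι] [DecidableEq C]
    (m : ι → ℝ) (F : C → ℝ) (s : ι → C) (p : ι) (c : C) : Prop :=
  payoff m F s p < payoff m F (Function.update s p c) p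

/-- Miner `p` is stable in `s`: it has no better response step. -/
def minerStable {ι C : Type*} [Fintype ι] [DecidableEq ι] [DecidableEq C]
    (m : ι → ℝ) (F : C → ℝ) (s : ι → C) (p : ι) : Prop :=
  ∀ c, ¬ betterStep m F s p c

/-- A configuration is stable (a pure equilibrium) if no miner has a better response step. -/
def stableConfig {ι C : Type*} [Fintype ι] [DecidableEq ι] [DecidableEq C]
    (m : ι → ℝ) (F : C → ℝ) (s : ι → C) : Prop :=
  ∀ p c, ¬ betterStep m F s p c

/-- `R(s) = max_c RPU_c(s)`. -/
noncomputable def maxRPU {ι C : Type*} [Fintype ι] [Fintype C] [DecidableEq C] [Nonempty C]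
    (m : ι → ℝ) (F : C → ℝ) (s : ι → C) : ℝ :=
  Finset.univ.sup' Finset.univ_nonempty (RPU m F s)

/-- The designed reward function of stage `i` at configuration `s`: the target coin
`ctar = s_f.p_i` gets reward `R(s)·(M_{ctar}(s) + w)` where `w` is the anchor's power,
every other coin `c` gets `R(s)·M_c(s)`. -/
noncomputable def designedReward {ι C : Type*} [Fintype ι] [Fintype C] [DecidableEq C]
    [Nonempty C] (m : ι → ℝ) (F : C → ℝ) (s : ι → C) (ctar : C) (w : ℝ) : C → ℝ :=
  fun c => if c = ctar then maxRPU m F s * (totalPower m s ctar + w)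
           else maxRPU m F s * totalPower m s c

/-!
Termination holds for arbitrary fixed nonnegative rewards. When a miner leaves a coin with revenue
per unit `r`, every miner whose revenue per unit ends up at most `r` already had it at most `r`,
while the mover itself ends strictly above `r`; so the number of miners at or below `r` drops.
On a cycle of better responses, taking for `r` the least revenue per unit ever left behind makes
this count drop strictly once and never grow, which is absurd.

For the limit, write `M`, `N` for the initial loads of `s_f.p_{i-1}` and `s_f.p_i`. Along the
path the load of `s_f.p_{i-1}` stays in `[M - m_j, M]`, so every coin `c` keeps a reward at least
`R · M_c`, and a better move of `p` to `c` forces `R · (M_c + m_p) < H_c`. Hence nobody moves to a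
third coin, only miners lighter than the mover move to `s_f.p_{i-1}`, and only miners lighter than
the anchor move to `s_f.p_i`: the miners below the mover never move. Finally, while the mover still
sits on `s_f.p_{i-1}`, that coin carries exactly the load `M`, so the mover earns `R` per unit
there and would earn `R (N + m_a) / (N + m_j) > R` on `s_f.p_i`: such a configuration is not
stable.
-/

section GameOfCoins

variable {ι C : Type*} [Fintype ι] [DecidableEq C] {m : ι → ℝ} {F : C → ℝ}
  {t : ι → C} {p : ι} {c d : C}

theorem totalPower_nonneg (hm : ∀ q, 0 ≤ m q) (t : ι → C) (c : C) : 0 ≤ totalPower m t c :=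
  sum_nonneg fun q _ => ite_nonneg (hm q) le_rfl

theorem le_totalPower (hm : ∀ q, 0 ≤ m q) (h : t p = c) : m p ≤ totalPower m t c := by
  simpa [h, totalPower] using single_le_sum (f := fun q => if t q = c then m q else 0)
    (fun q _ => ite_nonneg (hm q) le_rfl) (mem_univ p)

theorem totalPower_mono (hm : ∀ q, 0 ≤ m q) {s t : ι → C} (h : ∀ q, s q = c → t q = c) :
    totalPower m s c ≤ totalPower m t c :=
  sum_le_sum fun q _ => by
    by_cases hq : s q = c
    · simp [hq, h q hq]
    · simpa [hq] using ite_nonneg (hm q) le_rfl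

theorem payoff_eq_mul_RPU : payoff m F t p = m p * RPU m F t (t p) :=
  mul_div_assoc _ _ _

theorem maxRPU_pos [Fintype C] [Nonempty C] [Nonempty ι] (hm : ∀ q, 0 < m q)
    (hF : ∀ c, 0 < F c) (t : ι → C) : 0 < maxRPU m F t := by
  obtain ⟨p⟩ := ‹Nonempty ι›
  have hload : 0 < totalPower m t (t p) := (hm p).trans_le (le_totalPower (fun q => (hm q).le) rfl)
  exact (div_pos (hF (t p)) hload).trans_le (le_sup' (RPU m F t) (mem_univ (t p)))

variable [DecidableEq ι]

theorem totalPower_update :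
    totalPower m (update t p c) d
      = totalPower m t d + (if c = d then m p else 0) - (if t p = d then m p else 0) := by
  unfold totalPower
  rw [← sum_erase_add _ _ (mem_univ p),
    ← sum_erase_add (s := univ) (f := fun q => if t q = d then m q else 0) (mem_univ p),
    sum_congr rfl fun q hq => by rw [update_of_ne (ne_of_mem_erase hq)], update_self]
  ring

theorem totalPower_update_of_ne (h : t p ≠ c) :
    totalPower m (update t p c) c = totalPower m t c + m p := by
  simp [totalPower_update, h]

theorem totalPower_update_le (hm : ∀ q, 0 ≤ m q) (h : d ≠ c) :
    totalPower m (update t p c) d ≤ totalPower m t d := by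
  rw [totalPower_update, if_neg h.symm]
  split_ifs <;> linarith [hm p]

theorem betterStep_iff_RPU_lt (hp : 0 < m p) :
    betterStep m F t p c ↔ RPU m F t (t p) < RPU m F (update t p c) c := by
  rw [betterStep, payoff_eq_mul_RPU, payoff_eq_mul_RPU, update_self, mul_lt_mul_iff_right₀ hp]

theorem ne_of_betterStep (h : betterStep m F t p c) : t p ≠ c := by
  rintro rfl
  rw [betterStep, update_eq_self] at h
  exact lt_irrefl _ h

theorem RPU_update_of_ne (h : t p ≠ c) :
    RPU m F (update t p c) c = F c / (totalPower m t c + m p) := by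
  rw [RPU, totalPower_update_of_ne h]

theorem mul_add_lt_of_betterStep (hm : ∀ q, 0 < m q) {R : ℝ}
    (hsrc : R * totalPower m t (t p) ≤ F (t p)) (hb : betterStep m F t p c) :
    R * (totalPower m t c + m p) < F c := by
  have hm0 q : 0 ≤ m q := (hm q).le
  have hgain := (betterStep_iff_RPU_lt (hm p)).1 hb
  rw [RPU_update_of_ne (ne_of_betterStep hb)] at hgain
  have hsrc_pos : 0 < totalPower m t (t p) := (hm p).trans_le (le_totalPower hm0 rfl)
  have hdst_pos : 0 < totalPower m t c + m p := by linarith [totalPower_nonneg hm0 t c, hm p]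
  rw [← lt_div_iff₀ hdst_pos]
  exact ((le_div_iff₀ hsrc_pos).2 (by linarith)).trans_lt hgain

noncomputable def lowMiners (m : ι → ℝ) (F : C → ℝ) (t : ι → C) (x : ℝ) : Finset ι :=
  {q | RPU m F t (t q) ≤ x}

theorem lowMiners_update_subset (hm : ∀ q, 0 < m q) (hF : ∀ c, 0 ≤ F c)
    (hb : betterStep m F t p c) {x : ℝ} (hx : x ≤ RPU m F t (t p)) :
    lowMiners m F (update t p c) x ⊆ lowMiners m F t x := by
  intro q
  simp only [lowMiners, mem_filter, mem_univ, true_and]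
  intro hq
  have hgain := (betterStep_iff_RPU_lt (hm p)).1 hb
  by_cases hqc : update t p c q = c
  · rw [hqc] at hq
    linarith
  · have hqp : q ≠ p := by
      rintro rfl
      exact hqc (update_self _ _ _)
    rw [update_of_ne hqp] at hq hqc
    refine le_trans (div_le_div_of_nonneg_left (hF _) ?_ (totalPower_update_le
      (fun q => (hm q).le) hqc)) hq
    exact (hm q).trans_le (le_totalPower (fun q => (hm q).le) (by rw [update_of_ne hqp]))

theorem card_lowMiners_update_lt (hm : ∀ q, 0 < m q) (hF : ∀ c, 0 ≤ F c)
    (hb : betterStep m F t p c) :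
    #(lowMiners m F (update t p c) (RPU m F t (t p))) < #(lowMiners m F t (RPU m F t (t p))) := by
  have hsub := lowMiners_update_subset hm hF hb le_rfl
  refine card_lt_card ((ssubset_iff_of_subset hsub).2 ⟨p, ?_, ?_⟩)
  · simp [lowMiners]
  · have hgain := (betterStep_iff_RPU_lt (hm p)).1 hb
    simpa [lowMiners] using hgain

def BetterResponse (m : ι → ℝ) (F : C → ℝ) (t t' : ι → C) : Prop :=
  ∃ p c, betterStep m F t p c ∧ t' = update t p c

theorem not_forall_betterResponse [Finite C] (hm : ∀ q, 0 < m q) (hF : ∀ c, 0 ≤ F c)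
    (f : ℕ → ι → C) : ¬ ∀ k, BetterResponse m F (f k) (f (k + 1)) := by
  intro hf
  choose p c hb hf using hf
  obtain ⟨x, y, hxy, hcycle⟩ := Set.Finite.exists_lt_map_eq_of_forall_mem (t := Set.univ) (f := f)
    (fun _ => Set.mem_univ _) Set.finite_univ
  obtain ⟨k, hk, hmin⟩ := (Ico x y).exists_min_image (fun k => RPU m F (f k) (f k (p k)))
    (nonempty_Ico.2 hxy)
  obtain ⟨hxk, hky⟩ := mem_Ico.1 hk
  let count i := #(lowMiners m F (f i) (RPU m F (f k) (f k (p k))))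
  have hanti : AntitoneOn count (Set.Icc x y) :=
    antitoneOn_of_add_one_le Set.ordConnected_Icc fun i _ hi hi1 => by
      simp only [count, hf i]
      exact card_le_card (lowMiners_update_subset hm hF (hb i)
        (hmin i (mem_Ico.2 ⟨hi.1, Nat.lt_of_succ_le hi1.2⟩)))
  have hdrop : count (k + 1) < count k := by
    simp only [count, hf k]
    exact card_lowMiners_update_lt hm hF (hb k)
  have : count y < count y :=
    calc count y ≤ count (k + 1) := hanti ⟨by omega, hky⟩ ⟨hxy.le, le_rfl⟩ hky
      _ < count k := hdrop
      _ ≤ count x := hanti ⟨le_rfl, hxy.le⟩ ⟨hxk, hky.le⟩ hxk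
      _ = count y := by simp only [count, hcycle]
  exact lt_irrefl _ this

end GameOfCoins

/-- Stage `i` seen from a configuration `s ∈ T_i`: `prev = s_f.p_{i-1}`, `target = s_f.p_i`,
`mover = m_i(s)` and `anchor = a_i(s)`. -/
structure Stage (C : Type*) (n : ℕ) where
  m : Fin n → ℝ
  s : Fin n → C
  mover : Fin n
  anchor : Fin n
  prev : C
  target : C
  R : ℝ
  m_pos : ∀ p, 0 < m p
  m_strictAnti : StrictAnti m
  anchor_succ : (anchor : ℕ) + 1 = mover
  prev_ne_target : prev ≠ target
  s_mover : s mover = prev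
  s_of_mover_lt : ∀ l, mover < l → s l = target
  R_pos : 0 < R

namespace Stage

variable {C : Type*} {n : ℕ} (X : Stage C n) {t : Fin n → C} {p : Fin n} {c : C}

theorem m_mover_lt_m_anchor : X.m X.mover < X.m X.anchor :=
  X.m_strictAnti (Fin.lt_def.2 (by have := X.anchor_succ; omega))

theorem mover_le_of_m_lt (h : X.m p < X.m X.anchor) : X.mover ≤ p := by
  have hap := Fin.lt_def.1 (X.m_strictAnti.lt_iff_gt.1 h)
  have := X.anchor_succ
  exact Fin.le_def.2 (by omega)

theorem mover_lt_of_m_lt (h : X.m p < X.m X.mover) : X.mover < p :=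
  X.m_strictAnti.lt_iff_gt.1 h

variable [DecidableEq C]

noncomputable def reward (c : C) : ℝ :=
  X.R * (totalPower X.m X.s c + if c = X.target then X.m X.anchor else 0)

theorem reward_nonneg (c : C) : 0 ≤ X.reward c :=
  mul_nonneg X.R_pos.le (add_nonneg (totalPower_nonneg (fun q => (X.m_pos q).le) _ _)
    (ite_nonneg (X.m_pos _).le le_rfl))

theorem reward_of_ne (hc : c ≠ X.target) : X.reward c = X.R * totalPower X.m X.s c := by
  simp [reward, hc]

theorem reward_target :
    X.reward X.target = X.R * (totalPower X.m X.s X.target + X.m X.anchor) := by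
  simp [reward]

structure Inv (t : Fin n → C) : Prop where
  apply_of_lt_mover : ∀ k, k < X.mover → t k = X.s k
  apply_of_mover_le : ∀ k, X.mover ≤ k → t k = X.prev ∨ t k = X.target
  totalPower_prev_le : totalPower X.m t X.prev ≤ totalPower X.m X.s X.prev

theorem inv_s : X.Inv X.s := by
  refine ⟨fun _ _ => rfl, fun k hk => ?_, le_rfl⟩
  rcases hk.eq_or_lt with rfl | hk
  · exact Or.inl X.s_mover
  · exact Or.inr (X.s_of_mover_lt k hk)

namespace Inv

variable {X}

theorem totalPower_of_ne (ht : X.Inv t) (hp : c ≠ X.prev) (ht' : c ≠ X.target) :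
    totalPower X.m t c = totalPower X.m X.s c := by
  refine sum_congr rfl fun k _ => ?_
  rcases lt_or_ge k X.mover with hk | hk
  · rw [ht.apply_of_lt_mover k hk]
  · have hne {d : C} (hd : d = X.prev ∨ d = X.target) : d ≠ c := by
      rcases hd with rfl | rfl <;> [exact hp.symm; exact ht'.symm]
    rw [if_neg (hne (ht.apply_of_mover_le k hk)), if_neg (hne (X.inv_s.apply_of_mover_le k hk))]

theorem totalPower_prev_add_target (ht : X.Inv t) :
    totalPower X.m t X.prev + totalPower X.m t X.target
      = totalPower X.m X.s X.prev + totalPower X.m X.s X.target := by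
  simp only [totalPower, ← sum_add_distrib]
  refine sum_congr rfl fun k _ => ?_
  rcases lt_or_ge k X.mover with hk | hk
  · rw [ht.apply_of_lt_mover k hk]
  · have := X.prev_ne_target
    rcases ht.apply_of_mover_le k hk with h | h <;> rcases X.inv_s.apply_of_mover_le k hk with h' | h' <;>
      simp [h, h', this, this.symm]

theorem totalPower_s_prev_le_add (ht : X.Inv t) :
    totalPower X.m X.s X.prev ≤ totalPower X.m t X.prev + X.m X.mover := by
  have hmover : X.m X.mover = ∑ k, if k = X.mover then X.m k else 0 := by simp
  rw [hmover, totalPower, totalPower, ← sum_add_distrib]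
  refine sum_le_sum fun k _ => ?_
  have hm0 := (X.m_pos k).le
  rcases lt_trichotomy k X.mover with hk | rfl | hk
  · simp [ht.apply_of_lt_mover k hk, hk.ne]
  · simp only [if_true]
    split_ifs <;> linarith
  · simp [X.s_of_mover_lt k hk, X.prev_ne_target.symm, hk.ne', ite_nonneg hm0 le_rfl]

theorem R_mul_le_reward (ht : X.Inv t) (c : C) : X.R * totalPower X.m t c ≤ X.reward c := by
  have hR := X.R_pos
  by_cases hcp : c = X.prev
  · subst hcp
    rw [X.reward_of_ne X.prev_ne_target]
    exact mul_le_mul_of_nonneg_left ht.totalPower_prev_le hR.le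
  by_cases hct : c = X.target
  · subst hct
    rw [X.reward_target]
    refine mul_le_mul_of_nonneg_left ?_ hR.le
    linarith [ht.totalPower_prev_add_target, ht.totalPower_s_prev_le_add, X.m_mover_lt_m_anchor]
  · rw [X.reward_of_ne hct, ht.totalPower_of_ne hcp hct]

theorem update_of_betterStep (ht : X.Inv t) (hb : betterStep X.m X.reward t p c) :
    X.Inv (Function.update t p c) := by
  have hR := X.R_pos
  have hgain := mul_add_lt_of_betterStep X.m_pos (ht.R_mul_le_reward (t p)) hb
  suffices h : X.mover ≤ p ∧ (c = X.prev ∨ c = X.target) ∧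
      totalPower X.m (Function.update t p c) X.prev ≤ totalPower X.m X.s X.prev by
    obtain ⟨hp, hc, hload⟩ := h
    refine ⟨fun k hk => ?_, fun k hk => ?_, hload⟩
    · rw [update_of_ne (hk.trans_le hp).ne]
      exact ht.apply_of_lt_mover k hk
    · rcases eq_or_ne k p with rfl | hkp
      · rwa [update_self]
      · rw [update_of_ne hkp]
        exact ht.apply_of_mover_le k hk
  by_cases hcp : c = X.prev
  · subst hcp
    rw [X.reward_of_ne X.prev_ne_target, mul_lt_mul_iff_right₀ hR] at hgain
    have hp : X.m p < X.m X.mover := by linarith [ht.totalPower_s_prev_le_add]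
    rw [totalPower_update_of_ne (ne_of_betterStep hb)]
    exact ⟨(X.mover_lt_of_m_lt hp).le, Or.inl rfl, by linarith⟩
  by_cases hct : c = X.target
  · subst hct
    rw [X.reward_target, mul_lt_mul_iff_right₀ hR] at hgain
    have hp : X.m p < X.m X.anchor := by linarith [ht.totalPower_prev_add_target, ht.totalPower_prev_le]
    exact ⟨X.mover_le_of_m_lt hp, Or.inr rfl,
      (totalPower_update_le (fun q => (X.m_pos q).le) X.prev_ne_target).trans ht.totalPower_prev_le⟩
  · rw [X.reward_of_ne hct, ht.totalPower_of_ne hcp hct, mul_lt_mul_iff_right₀ hR] at hgain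
    linarith [X.m_pos p]

theorem apply_mover_of_stable (ht : X.Inv t) (hst : stableConfig X.m X.reward t) :
    t X.mover = X.target := by
  refine (ht.apply_of_mover_le X.mover le_rfl).resolve_left fun hprev => hst X.mover X.target ?_
  have hm0 q : 0 ≤ X.m q := (X.m_pos q).le
  have hload : totalPower X.m t X.prev = totalPower X.m X.s X.prev := by
    refine le_antisymm ht.totalPower_prev_le (totalPower_mono hm0 fun k hk => ?_)
    rcases lt_trichotomy k X.mover with hk' | rfl | hk'
    · rwa [ht.apply_of_lt_mover k hk']
    · exact hprev
    · exact absurd ((X.s_of_mover_lt k hk').symm.trans hk) X.prev_ne_target.symm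
  have hload' := ht.totalPower_prev_add_target
  have hM : 0 < totalPower X.m X.s X.prev := (X.m_pos _).trans_le (le_totalPower hm0 X.s_mover)
  have hN := totalPower_nonneg hm0 X.s X.target
  rw [betterStep_iff_RPU_lt (X.m_pos _), RPU_update_of_ne (hprev.trans_ne X.prev_ne_target),
    RPU, hprev, X.reward_of_ne X.prev_ne_target, X.reward_target, hload, mul_div_assoc,
    div_self hM.ne', mul_one, lt_div_iff₀ (by linarith [X.m_pos X.mover]),
    mul_lt_mul_iff_right₀ X.R_pos]
  linarith [X.m_mover_lt_m_anchor]

end Inv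

theorem inv_of_reflTransGen (h : Relation.ReflTransGen (BetterResponse X.m X.reward) X.s t) :
    X.Inv t := by
  induction h with
  | refl => exact X.inv_s
  | tail _ hstep ih =>
    obtain ⟨p, c, hb, rfl⟩ := hstep
    exact ih.update_of_betterStep hb

end Stage

theorem designedReward_eq {ι C : Type*} [Fintype ι] [Fintype C] [DecidableEq C] [Nonempty C]
    (m : ι → ℝ) (F : C → ℝ) (s : ι → C) (ctar : C) (w : ℝ) :
    designedReward m F s ctar w
      = fun c => maxRPU m F s * (totalPower m s c + if c = ctar then w else 0) := by
  funext c
  by_cases hc : c = ctar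
  · subst hc
    simp [designedReward]
  · simp [designedReward, hc]

theorem stage_learning_converges_general {C : Type*} [Fintype C] [DecidableEq C] [Nonempty C]
    {n : ℕ} (m : Fin n → ℝ) (F : C → ℝ) (s_f : Fin n → C)
    (hm : ∀ p, 0 < m p) (hF : ∀ c, 0 < F c)
    (hdec : ∀ k l : Fin n, k < l → m l < m k)
    (iprev icur : Fin n)
    (hcoins : s_f iprev ≠ s_f icur)
    (s : Fin n → C)
    (hT₁ : ∀ k, k < icur → s k = s_f k)
    (hT₂ : ∀ k, icur ≤ k → s k = s_f icur ∨ s k = s_f iprev)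
    (j a : Fin n) (hj₀ : icur ≤ j) (hj₁ : s j = s_f iprev)
    (hj₂ : ∀ l, j < l → s l = s_f icur) (ha : (a : ℕ) + 1 = (j : ℕ))
    (H : C → ℝ) (hH : H = designedReward m F s (s_f icur) (m a)) :
    (∀ f : ℕ → Fin n → C, f 0 = s →
        ¬ ∀ k, ∃ p c, betterStep m H (f k) p c ∧ f (k + 1) = Function.update (f k) p c) ∧
    (∀ s' : Fin n → C,
        Relation.ReflTransGen
          (fun t t' => ∃ p c, betterStep m H t p c ∧ t' = Function.update t p c) s s' →
        stableConfig m H s' →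
          ((∀ k, k < icur → s' k = s_f k) ∧
            (∀ k, icur ≤ k → s' k = s_f icur ∨ s' k = s_f iprev) ∧
            (∀ k, k < j → s' k = s k) ∧
            s' j = s_f icur)) := by
  have : Nonempty (Fin n) := ⟨j⟩
  let X : Stage C n := ⟨m, s, j, a, s_f iprev, s_f icur, maxRPU m F s, hm, hdec, ha, hcoins, hj₁,
    hj₂, maxRPU_pos hm hF s⟩
  obtain rfl : H = X.reward := hH.trans (designedReward_eq m F s (s_f icur) (m a))
  refine ⟨fun f _ hf => not_forall_betterResponse hm X.reward_nonneg f hf,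
    fun s' hs' hstable => ?_⟩
  have hinv := X.inv_of_reflTransGen hs'
  refine ⟨fun k hk => ?_, fun k hk => ?_, hinv.apply_of_lt_mover, hinv.apply_mover_of_stable hstable⟩
  · rw [hinv.apply_of_lt_mover k (hk.trans_le hj₀)]
    exact hT₁ k hk
  · rcases lt_or_ge k j with hkj | hkj
    · rw [hinv.apply_of_lt_mover k hkj]
      exact hT₂ k hk
    · exact (hinv.apply_of_mover_le k hkj).symm

/-- in stage `i > 1` with designed rewards `H_i(s)`, every better response
learning starting from `s ∈ T_i \ {s_i}` terminates, and every stable configuration `s'`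
it reaches lies in `T_i`, agrees with `s` on all miners below the mover `j = m_i(s)`,
and has the mover on `s_f.p_i`. -/
theorem stage_learning_converges {C : Type*} [Fintype C] [DecidableEq C] [Nonempty C]
    {n : ℕ} (m : Fin n → ℝ) (F : C → ℝ) (s_f : Fin n → C)
    (hm : ∀ p, 0 < m p) (hF : ∀ c, 0 < F c)
    (hdec : ∀ k l : Fin n, k < l → m l < m k)
    (hsf : stableConfig m F s_f)
    (iprev icur : Fin n) (hstage : (iprev : ℕ) + 1 = (icur : ℕ))
    (hcoins : s_f iprev ≠ s_f icur)
    (s : Fin n → C)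
    (hT₁ : ∀ k, k < icur → s k = s_f k)
    (hT₂ : ∀ k, icur ≤ k → s k = s_f icur ∨ s k = s_f iprev)
    (j a : Fin n) (hj₀ : icur ≤ j) (hj₁ : s j = s_f iprev)
    (hj₂ : ∀ l, j < l → s l = s_f icur) (ha : (a : ℕ) + 1 = (j : ℕ))
    (H : C → ℝ) (hH : H = designedReward m F s (s_f icur) (m a)) :
    (∀ f : ℕ → Fin n → C, f 0 = s →
        ¬ ∀ k, ∃ p c, betterStep m H (f k) p c ∧ f (k + 1) = Function.update (f k) p c) ∧
    (∀ s' : Fin n → C,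
        Relation.ReflTransGen
          (fun t t' => ∃ p c, betterStep m H t p c ∧ t' = Function.update t p c) s s' →
        stableConfig m H s' →
          ((∀ k, k < icur → s' k = s_f k) ∧
            (∀ k, icur ≤ k → s' k = s_f icur ∨ s' k = s_f iprev) ∧
            (∀ k, k < j → s' k = s k) ∧
            s' j = s_f icur)) :=
  stage_learning_converges_general m F s_f hm hF hdec iprev icur hcoins s hT₁ hT₂ j a hj₀ hj₁ hj₂ ha
    H hH
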